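/- If R ∈ SO(3) is a symmetry of S (R '' S = S) and S is invariant under all rotations about the unit axis u but S is not invariant under all of SO(3), then R maps the line spanned by u to itself: R u = u or R u = -u. -/

import Mathlib

/-!
The unit vectors `w` about which `S` is invariant under all rotations `R_w(φ)` are permuted by
the symmetries `Q` of `S`, since `R_{Q w}(φ) = Q R_w(φ) Q⁻¹`. Hence `u` and `R u` are such axes,
and so is every rotation of one axis about another. If `R u ≠ ± u`, the axes at the angle `θ`
from `u` form a whole circle; rotating `u` about the points of this circle sweeps out the cap
of angular radius `2 θ` around `u`, and after finitely many doublings the axes fill the sphere.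
By Euler's rotation theorem every element of SO(3) is then a symmetry of `S`, a contradiction.
-/

/-- Rotation of ℝ³ by angle `φ` about the axis through the origin in direction `u`
(Rodrigues' formula; when `‖u‖ = 1` this is the usual rotation `R_u(φ)`). -/
noncomputable def rot (u : EuclideanSpace ℝ (Fin 3)) (φ : ℝ) (x : EuclideanSpace ℝ (Fin 3)) :
    EuclideanSpace ℝ (Fin 3) :=
  let c : EuclideanSpace ℝ (Fin 3) := WithLp.toLp 2 (crossProduct u x)
  Real.cos φ • x + Real.sin φ • c + ((1 - Real.cos φ) * (inner ℝ u x : ℝ)) • u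

/-- SO(3): the subgroup of the orthogonal group of 3×3 real matrices consisting of
matrices of determinant 1 (acting on ℝ³ by matrix-vector multiplication). -/
def SO3 : Subgroup (Matrix.orthogonalGroup (Fin 3) ℝ) where
  carrier := {A | (A : Matrix (Fin 3) (Fin 3) ℝ).det = 1}
  one_mem' := by simp
  mul_mem' := by
    intro a b ha hb
    simp only [Set.mem_setOf_eq] at *
    rw [Submonoid.coe_mul, Matrix.det_mul, ha, hb, one_mul]
  inv_mem' := by
    intro a ha
    simp only [Set.mem_setOf_eq] at *
    have h : ((a⁻¹ : Matrix.orthogonalGroup (Fin 3) ℝ) : Matrix (Fin 3) (Fin 3) ℝ) =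
        star (a : Matrix (Fin 3) (Fin 3) ℝ) := rfl
    rw [h, Matrix.star_eq_conjTranspose, Matrix.det_conjTranspose, ha, star_one]

open Matrix Real

noncomputable def rodrigues (a : Fin 3 → ℝ) (φ : ℝ) (x : Fin 3 → ℝ) : Fin 3 → ℝ :=
  cos φ • x + sin φ • a ⨯₃ x + ((1 - cos φ) * (a ⬝ᵥ x)) • a

section VectorAlgebra

theorem dotProduct_self_nonneg {n R : Type*} [Fintype n] [Ring R] [LinearOrder R]
    [IsStrictOrderedRing R] (v : n → R) : 0 ≤ v ⬝ᵥ v :=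
  Finset.sum_nonneg fun i _ => mul_self_nonneg (v i)

variable {a b p q w : Fin 3 → ℝ}

theorem cross_dot_cross_self (a x : Fin 3 → ℝ) :
    a ⨯₃ x ⬝ᵥ a ⨯₃ x = (a ⬝ᵥ a) * (x ⬝ᵥ x) - (a ⬝ᵥ x) ^ 2 := by
  rw [cross_dot_cross, dotProduct_comm x a]; ring

theorem abs_dotProduct_le_one (ha : a ⬝ᵥ a = 1) (hw : w ⬝ᵥ w = 1) : |a ⬝ᵥ w| ≤ 1 := by
  have := dotProduct_self_nonneg (a ⨯₃ w)
  rw [cross_dot_cross_self, ha, hw] at this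
  exact sq_le_one_iff_abs_le_one _ |>.mp (by linarith)

theorem eq_of_dotProduct_eq_one (ha : a ⬝ᵥ a = 1) (hw : w ⬝ᵥ w = 1) (h : a ⬝ᵥ w = 1) :
    w = a := by
  have : (w - a) ⬝ᵥ (w - a) = 0 := by
    simp only [sub_dotProduct, dotProduct_sub, hw, ha, dotProduct_comm w a, h]; ring
  exact sub_eq_zero.mp (dotProduct_self_eq_zero.mp this)

theorem eq_neg_of_dotProduct_eq_neg_one (ha : a ⬝ᵥ a = 1) (hw : w ⬝ᵥ w = 1)
    (h : a ⬝ᵥ w = -1) : w = -a :=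
  eq_of_dotProduct_eq_one (by rwa [neg_dotProduct, dotProduct_neg, neg_neg]) hw
    (by rw [neg_dotProduct, h, neg_neg])

/-- The witness is `c = α (a + w) + γ (a ⨯₃ w)`, with `α` and `γ` fitted to
`a ⬝ᵥ c = t` and `c ⬝ᵥ c = 1`. -/
theorem exists_dotProduct_eq_dotProduct_eq (ha : a ⬝ᵥ a = 1) (hw : w ⬝ᵥ w = 1) {t : ℝ}
    (hlt : a ⬝ᵥ w < 1) (hgt : -1 < a ⬝ᵥ w) (ht : 2 * t ^ 2 - 1 ≤ a ⬝ᵥ w) :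
    ∃ c, c ⬝ᵥ c = 1 ∧ a ⬝ᵥ c = t ∧ w ⬝ᵥ c = t := by
  set g := a ⬝ᵥ w
  have hn : a ⨯₃ w ⬝ᵥ a ⨯₃ w = 1 - g ^ 2 := by rw [cross_dot_cross_self, ha, hw]; ring
  have hD : 0 < (1 + g) * (1 - g ^ 2) := mul_pos (by linarith) (by nlinarith)
  set α := t / (1 + g)
  have hα : α * (1 + g) = t := div_mul_cancel₀ _ (by linarith)
  have hγ := Real.mul_self_sqrt (div_nonneg (by linarith) hD.le :
    0 ≤ (1 + g - 2 * t ^ 2) / ((1 + g) * (1 - g ^ 2)))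
  set γ := √((1 + g - 2 * t ^ 2) / ((1 + g) * (1 - g ^ 2)))
  rw [eq_div_iff hD.ne'] at hγ
  refine ⟨α • (a + w) + γ • a ⨯₃ w, ?_, ?_, ?_⟩
  · simp only [dotProduct_add, add_dotProduct, dotProduct_smul, smul_dotProduct, smul_eq_mul,
      ha, hw, dot_self_cross, dot_cross_self, dotProduct_comm (a ⨯₃ w) a,
      dotProduct_comm (a ⨯₃ w) w, dotProduct_comm w a, hn]
    apply mul_right_cancel₀ hD.ne'
    linear_combination (2 * (1 - g ^ 2) * (α * (1 + g) + t)) * hα + (1 - g ^ 2) * hγ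
  · simp only [dotProduct_add, dotProduct_smul, smul_eq_mul, ha, dot_self_cross]
    linear_combination hα
  · simp only [dotProduct_add, dotProduct_smul, smul_eq_mul, hw, dot_cross_self,
      dotProduct_comm w a]
    linear_combination hα

theorem exists_smul_dotProduct_self_eq_one {v : Fin 3 → ℝ} (hv : v ≠ 0) :
    ∃ r : ℝ, r • v ⬝ᵥ r • v = 1 := by
  have hpos : 0 < v ⬝ᵥ v :=
    (dotProduct_self_nonneg v).lt_of_ne fun h => hv (dotProduct_self_eq_zero.mp h.symm)
  refine ⟨(√(v ⬝ᵥ v))⁻¹, ?_⟩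
  rw [smul_dotProduct, dotProduct_smul, smul_eq_mul, smul_eq_mul, ← mul_assoc, ← mul_inv,
    Real.mul_self_sqrt hpos.le, inv_mul_cancel₀ hpos.ne']

theorem exists_dotProduct_eq_zero (w : Fin 3 → ℝ) : ∃ e, w ⬝ᵥ e = 0 ∧ e ⬝ᵥ e = 1 := by
  by_cases h : w 1 = 0 ∧ w 2 = 0
  · exact ⟨![0, 1, 0], by simp [dotProduct, Fin.sum_univ_three, h.1], by
      simp [dotProduct, Fin.sum_univ_three]⟩
  · have hv : (![0, w 2, -w 1] : Fin 3 → ℝ) ≠ 0 := fun h0 =>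
      h ⟨by simpa using congrFun h0 2, by simpa using congrFun h0 1⟩
    obtain ⟨r, hr⟩ := exists_smul_dotProduct_self_eq_one hv
    refine ⟨r • ![0, w 2, -w 1], ?_, hr⟩
    rw [dotProduct_smul, vec3_dotProduct]
    show r • (w 0 * 0 + w 1 * w 2 + w 2 * -w 1) = 0
    rw [smul_eq_mul]; ring

/-- The expansion of `q` in the orthogonal basis `p, a ⨯₃ p` of the plane orthogonal to `a`. -/
theorem dotProduct_self_smul_eq_of_orthogonal (ha : a ⬝ᵥ a = 1) (hp : a ⬝ᵥ p = 0)
    (hq : a ⬝ᵥ q = 0) :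
    (p ⬝ᵥ p) • q = (p ⬝ᵥ q) • p + (a ⨯₃ p ⬝ᵥ q) • a ⨯₃ p := by
  have hpq : p ⨯₃ q = (a ⬝ᵥ p ⨯₃ q) • a := by
    have h0 : a ⨯₃ (p ⨯₃ q) = 0 := by
      rw [cross_cross_eq_smul_sub_smul', hq, dotProduct_comm, hp, zero_smul, zero_smul, sub_zero]
    have := cross_cross_eq_smul_sub_smul' a a (p ⨯₃ q)
    rw [h0, map_zero, ha, one_smul] at this
    exact (sub_eq_zero.mp this.symm).symm
  have hk : a ⬝ᵥ p ⨯₃ q = a ⨯₃ p ⬝ᵥ q := by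
    rw [triple_product_permutation, triple_product_permutation, dotProduct_comm]
  have := cross_cross_eq_smul_sub_smul' p q p
  rw [← cross_anticomm p q, hpq, hk, map_neg, map_smul, ← cross_anticomm a p, smul_neg,
    neg_neg, dotProduct_comm q p] at this
  rw [this]; abel

theorem eq_add_smul_of_orthonormal (ha : a ⬝ᵥ a = 1) (hb : b ⬝ᵥ b = 1) (hab : a ⬝ᵥ b = 0)
    (x : Fin 3 → ℝ) : x = (a ⬝ᵥ x) • a + (b ⬝ᵥ x) • b + (a ⨯₃ b ⬝ᵥ x) • a ⨯₃ b := by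
  have hq : a ⬝ᵥ (x - (a ⬝ᵥ x) • a) = 0 := by simp [dotProduct_sub, ha]
  have := dotProduct_self_smul_eq_of_orthogonal ha hab hq
  rw [hb, one_smul, dotProduct_sub, dotProduct_sub, dotProduct_smul, dotProduct_smul,
    dotProduct_comm b a, hab, dotProduct_comm (a ⨯₃ b) a, dot_self_cross] at this
  simp only [smul_zero, sub_zero] at this
  rw [add_assoc, ← this]; abel

theorem exists_cos_sin {c s : ℝ} (h : c ^ 2 + s ^ 2 = 1) : ∃ φ, cos φ = c ∧ sin φ = s := by
  have hc1 : -1 ≤ c := by nlinarith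
  have hc2 : c ≤ 1 := by nlinarith
  have hs : √(1 - c ^ 2) = |s| := by rw [show 1 - c ^ 2 = s ^ 2 by linarith, Real.sqrt_sq_eq_abs]
  rcases le_or_gt 0 s with hs0 | hs0
  · exact ⟨arccos c, cos_arccos hc1 hc2, by rw [sin_arccos, hs, abs_of_nonneg hs0]⟩
  · exact ⟨-arccos c, by rw [cos_neg, cos_arccos hc1 hc2], by
      rw [sin_neg, sin_arccos, hs, abs_of_neg hs0, neg_neg]⟩

theorem exists_cos_smul_add_sin_smul_eq (ha : a ⬝ᵥ a = 1) (hp : a ⬝ᵥ p = 0) (hq : a ⬝ᵥ q = 0)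
    (hpq : p ⬝ᵥ p = q ⬝ᵥ q) :
    ∃ φ, cos φ • p + sin φ • a ⨯₃ p = q := by
  rcases (dotProduct_self_nonneg p).eq_or_lt with hr | hr
  · have hp0 : p = 0 := dotProduct_self_eq_zero.mp hr.symm
    have hq0 : q = 0 := dotProduct_self_eq_zero.mp (by rw [← hpq, ← hr])
    exact ⟨0, by simp [hp0, hq0]⟩
  set c := (p ⬝ᵥ q) / (p ⬝ᵥ p)
  set s := (a ⨯₃ p ⬝ᵥ q) / (p ⬝ᵥ p)
  have hqcs : q = c • p + s • a ⨯₃ p := by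
    have := dotProduct_self_smul_eq_of_orthogonal ha hp hq
    rw [← (smul_right_injective _ hr.ne').eq_iff, this, smul_add, smul_smul, smul_smul,
      mul_div_cancel₀ _ hr.ne', mul_div_cancel₀ _ hr.ne']
  have hcs : c ^ 2 + s ^ 2 = 1 := by
    have : q ⬝ᵥ q = (c ^ 2 + s ^ 2) * (p ⬝ᵥ p) := by
      conv_lhs => rw [hqcs]
      simp only [dotProduct_add, add_dotProduct, dotProduct_smul, smul_dotProduct, smul_eq_mul,
        cross_dot_cross_self, ha, hp, dotProduct_comm (a ⨯₃ p) p, dot_cross_self]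
      ring
    rw [← hpq] at this
    exact (mul_eq_right₀ hr.ne').mp this.symm
  obtain ⟨φ, hφc, hφs⟩ := exists_cos_sin hcs
  exact ⟨φ, by rw [hφc, hφs, ← hqcs]⟩

end VectorAlgebra

theorem rodrigues_neg_axis (a : Fin 3 → ℝ) (φ : ℝ) (x : Fin 3 → ℝ) :
    rodrigues (-a) φ x = rodrigues a (-φ) x := by
  simp only [rodrigues, cos_neg, sin_neg, map_neg, LinearMap.neg_apply, neg_dotProduct,
    smul_neg, neg_smul, mul_neg]
  module

theorem rodrigues_rodrigues {a : Fin 3 → ℝ} (ha : a ⬝ᵥ a = 1) (φ ψ : ℝ) (x : Fin 3 → ℝ) :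
    rodrigues a φ (rodrigues a ψ x) = rodrigues a (φ + ψ) x := by
  simp only [rodrigues, map_add, map_smul, cross_self, dotProduct_add, dotProduct_smul,
    dot_self_cross, cross_cross_eq_smul_sub_smul', ha, smul_zero, smul_eq_mul, mul_zero,
    cos_add, sin_add, smul_sub, smul_smul]
  match_scalars <;> ring

theorem dotProduct_rodrigues {a : Fin 3 → ℝ} (ha : a ⬝ᵥ a = 1) (φ : ℝ) (x y : Fin 3 → ℝ) :
    rodrigues a φ x ⬝ᵥ rodrigues a φ y = x ⬝ᵥ y := by
  have hxy : x ⬝ᵥ a ⨯₃ y = -(a ⨯₃ x ⬝ᵥ y) := by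
    rw [triple_product_permutation, ← cross_anticomm, dotProduct_neg, triple_product_permutation,
      triple_product_permutation, dotProduct_comm]
  simp only [rodrigues, dotProduct_add, add_dotProduct, dotProduct_smul, smul_dotProduct,
    smul_eq_mul, cross_dot_cross, hxy, dot_self_cross, dotProduct_comm (a ⨯₃ x) a,
    dotProduct_comm x a, ha]
  linear_combination (x ⬝ᵥ y - (a ⬝ᵥ x) * (a ⬝ᵥ y)) * sin_sq_add_cos_sq φ

theorem exists_rodrigues_eq {a x y : Fin 3 → ℝ} (ha : a ⬝ᵥ a = 1) (hx : x ⬝ᵥ x = 1)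
    (hy : y ⬝ᵥ y = 1) (h : a ⬝ᵥ x = a ⬝ᵥ y) : ∃ φ, rodrigues a φ x = y := by
  set t := a ⬝ᵥ x
  have hrod (φ : ℝ) :
      rodrigues a φ x = t • a + (cos φ • (x - t • a) + sin φ • a ⨯₃ (x - t • a)) := by
    simp only [rodrigues, map_sub, map_smul, cross_self, smul_zero, sub_zero]
    module
  have hsq {z : Fin 3 → ℝ} (hz : z ⬝ᵥ z = 1) (hzt : a ⬝ᵥ z = t) :
      a ⬝ᵥ (z - t • a) = 0 ∧ (z - t • a) ⬝ᵥ (z - t • a) = 1 - t ^ 2 := by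
    constructor
    · simp [dotProduct_sub, ha, hzt]
    · simp only [sub_dotProduct, dotProduct_sub, dotProduct_smul, smul_dotProduct, smul_eq_mul,
        hz, ha, dotProduct_comm z a, hzt]
      ring
  obtain ⟨hpx, hxx⟩ := hsq hx rfl
  obtain ⟨hpy, hyy⟩ := hsq hy h.symm
  obtain ⟨φ, hφ⟩ := exists_cos_smul_add_sin_smul_eq ha hpx hpy (hxx.trans hyy.symm)
  exact ⟨φ, by rw [hrod, hφ, add_sub_cancel]⟩

section Orthogonal

variable {n : Type*} [Fintype n] [DecidableEq n] {R : Type*} [CommRing R] {A : Matrix n n R}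

theorem dotProduct_mulVec_mulVec (hA : A ∈ orthogonalGroup n R) (x y : n → R) :
    A *ᵥ x ⬝ᵥ A *ᵥ y = x ⬝ᵥ y := by
  rw [dotProduct_mulVec, ← mulVec_transpose, mulVec_mulVec,
    (mem_orthogonalGroup_iff' n R).mp hA, one_mulVec]

theorem mem_orthogonalGroup_of_dotProduct_mulVec
    (h : ∀ x y : n → R, A *ᵥ x ⬝ᵥ A *ᵥ y = x ⬝ᵥ y) : A ∈ orthogonalGroup n R := by
  rw [mem_orthogonalGroup_iff']
  refine ext_of_mulVec_single fun j => dotProduct_eq _ _ fun x => ?_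
  rw [← mulVec_mulVec, mulVec_transpose, ← dotProduct_mulVec, h, one_mulVec]

end Orthogonal

theorem isLinearMap_rodrigues (a : Fin 3 → ℝ) (φ : ℝ) : IsLinearMap ℝ (rodrigues a φ) where
  map_add x y := by
    simp only [rodrigues, map_add, dotProduct_add]
    module
  map_smul r x := by
    simp only [rodrigues, map_smul, dotProduct_smul, smul_eq_mul]
    module

noncomputable def rodriguesMatrix (a : Fin 3 → ℝ) (φ : ℝ) : Matrix (Fin 3) (Fin 3) ℝ :=
  LinearMap.toMatrix' (IsLinearMap.mk' _ (isLinearMap_rodrigues a φ))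

theorem rodriguesMatrix_mulVec (a : Fin 3 → ℝ) (φ : ℝ) (x : Fin 3 → ℝ) :
    rodriguesMatrix a φ *ᵥ x = rodrigues a φ x :=
  LinearMap.toMatrix'_mulVec _ x

theorem rodriguesMatrix_mem_specialOrthogonalGroup {a : Fin 3 → ℝ} (ha : a ⬝ᵥ a = 1) (φ : ℝ) :
    rodriguesMatrix a φ ∈ specialOrthogonalGroup (Fin 3) ℝ := by
  have horth (φ : ℝ) : rodriguesMatrix a φ ∈ orthogonalGroup (Fin 3) ℝ :=
    mem_orthogonalGroup_of_dotProduct_mulVec fun x y => by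
      simp only [rodriguesMatrix_mulVec, dotProduct_rodrigues ha]
  refine mem_specialOrthogonalGroup_iff.mpr ⟨horth φ, ?_⟩
  -- `det` is `±1` on the orthogonal group, and a square.
  have hsq : rodriguesMatrix a φ = rodriguesMatrix a (φ / 2) * rodriguesMatrix a (φ / 2) := by
    refine mulVec_injective (funext fun x => ?_)
    simp only [← mulVec_mulVec, rodriguesMatrix_mulVec, rodrigues_rodrigues ha, add_halves]
  have hunit := (det_of_mem_unitary (horth φ)).2
  have hnonneg : 0 ≤ (rodriguesMatrix a φ).det := by
    rw [hsq, det_mul]; exact mul_self_nonneg _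
  simp only [star_trivial] at hunit
  nlinarith

theorem det_vecCons_mulVec (A : Matrix (Fin 3) (Fin 3) ℝ) (x y z : Fin 3 → ℝ) :
    det ![A *ᵥ x, A *ᵥ y, A *ᵥ z] = det ![x, y, z] * det A := by
  have : (![A *ᵥ x, A *ᵥ y, A *ᵥ z] : Matrix (Fin 3) (Fin 3) ℝ) = of ![x, y, z] * Aᵀ := by
    ext i : 1
    fin_cases i <;> exact (vecMul_transpose A _).symm
  rw [this, det_mul, det_transpose]
  rfl

theorem crossProduct_mulVec {A : Matrix (Fin 3) (Fin 3) ℝ}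
    (hA : A ∈ specialOrthogonalGroup (Fin 3) ℝ) (x y : Fin 3 → ℝ) :
    (A *ᵥ x) ⨯₃ (A *ᵥ y) = A *ᵥ (x ⨯₃ y) := by
  obtain ⟨horth, hdet⟩ := mem_specialOrthogonalGroup_iff.mp hA
  refine dotProduct_eq _ _ fun w => ?_
  obtain ⟨z, rfl⟩ : ∃ z, A *ᵥ z = w :=
    ⟨Aᵀ *ᵥ w, by rw [mulVec_mulVec, (mem_orthogonalGroup_iff (Fin 3) ℝ).mp horth, one_mulVec]⟩
  rw [dotProduct_comm, triple_product_eq_det, det_vecCons_mulVec, hdet, mul_one,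
    ← triple_product_eq_det, dotProduct_comm, dotProduct_mulVec_mulVec horth, dotProduct_comm]

theorem mulVec_rodrigues {A : Matrix (Fin 3) (Fin 3) ℝ}
    (hA : A ∈ specialOrthogonalGroup (Fin 3) ℝ) (b : Fin 3 → ℝ) (φ : ℝ) (x : Fin 3 → ℝ) :
    A *ᵥ rodrigues b φ x = rodrigues (A *ᵥ b) φ (A *ᵥ x) := by
  have horth := (mem_specialOrthogonalGroup_iff.mp hA).1
  simp only [rodrigues, mulVec_add, mulVec_smul, crossProduct_mulVec hA,
    dotProduct_mulVec_mulVec horth]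

theorem rodrigues_self {a : Fin 3 → ℝ} (ha : a ⬝ᵥ a = 1) (φ : ℝ) : rodrigues a φ a = a := by
  simp only [rodrigues, cross_self, smul_zero, add_zero, ha, mul_one]
  module

theorem exists_mulVec_eq_self {A : Matrix (Fin 3) (Fin 3) ℝ}
    (hA : A ∈ specialOrthogonalGroup (Fin 3) ℝ) : ∃ w, w ⬝ᵥ w = 1 ∧ A *ᵥ w = w := by
  obtain ⟨horth, hdet⟩ := mem_specialOrthogonalGroup_iff.mp hA
  -- `Aᵀ (A - 1) = -(A - 1)ᵀ`, and `det (-M) = -det M` in odd dimension.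
  have hdet0 : (A - 1).det = 0 := by
    have h := congrArg det (show Aᵀ * (A - 1) = -(A - 1)ᵀ by
      rw [mul_sub, mul_one, (mem_orthogonalGroup_iff' (Fin 3) ℝ).mp horth, transpose_sub,
        transpose_one, neg_sub])
    rw [det_mul, det_transpose, hdet, one_mul, det_neg, det_transpose] at h
    norm_num at h
    linarith
  obtain ⟨v, hv0, hv⟩ := exists_mulVec_eq_zero_iff.mpr hdet0
  obtain ⟨r, hr⟩ := exists_smul_dotProduct_self_eq_one hv0
  refine ⟨r • v, hr, ?_⟩
  rw [sub_mulVec, one_mulVec, sub_eq_zero] at hv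
  rw [mulVec_smul, hv]

theorem exists_mulVec_eq_rodrigues_of_mulVec_eq_self {A : Matrix (Fin 3) (Fin 3) ℝ}
    (hA : A ∈ specialOrthogonalGroup (Fin 3) ℝ) {w : Fin 3 → ℝ} (hw : w ⬝ᵥ w = 1)
    (hAw : A *ᵥ w = w) : ∃ φ, ∀ x, A *ᵥ x = rodrigues w φ x := by
  have horth := (mem_specialOrthogonalGroup_iff.mp hA).1
  obtain ⟨e, hwe, he⟩ := exists_dotProduct_eq_zero w
  obtain ⟨φ, hφ⟩ := exists_rodrigues_eq hw he (by rw [dotProduct_mulVec_mulVec horth, he])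
    (show w ⬝ᵥ e = w ⬝ᵥ A *ᵥ e by rw [← hAw, dotProduct_mulVec_mulVec horth, hAw])
  set B := rodriguesMatrix w φ
  have hB := rodriguesMatrix_mem_specialOrthogonalGroup hw φ
  have hBw : B *ᵥ w = A *ᵥ w := by rw [rodriguesMatrix_mulVec, rodrigues_self hw, hAw]
  have hBe : B *ᵥ e = A *ᵥ e := by rw [rodriguesMatrix_mulVec, hφ]
  have hBwe : B *ᵥ (w ⨯₃ e) = A *ᵥ (w ⨯₃ e) := by
    rw [← crossProduct_mulVec hA, ← crossProduct_mulVec hB, hBw, hBe]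
  refine ⟨φ, fun x => ?_⟩
  rw [← rodriguesMatrix_mulVec]
  show A *ᵥ x = B *ᵥ x
  rw [eq_add_smul_of_orthonormal hw he hwe x]
  simp only [mulVec_add, mulVec_smul, hBw, hBe, hBwe]

theorem exists_mulVec_eq_rodrigues {A : Matrix (Fin 3) (Fin 3) ℝ}
    (hA : A ∈ specialOrthogonalGroup (Fin 3) ℝ) :
    ∃ w φ, w ⬝ᵥ w = 1 ∧ ∀ x, A *ᵥ x = rodrigues w φ x := by
  obtain ⟨w, hw, hAw⟩ := exists_mulVec_eq_self hA
  obtain ⟨φ, hφ⟩ := exists_mulVec_eq_rodrigues_of_mulVec_eq_self hA hw hAw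
  exact ⟨w, φ, hw, hφ⟩

structure IsAxisClosed (P : Set (Fin 3 → ℝ)) : Prop where
  dotProduct_self : ∀ a ∈ P, a ⬝ᵥ a = 1
  rodrigues_mem : ∀ a ∈ P, ∀ b ∈ P, ∀ φ, rodrigues a φ b ∈ P
  neg_mem : ∀ a ∈ P, -a ∈ P

namespace IsAxisClosed

variable {P : Set (Fin 3 → ℝ)} {a b w : Fin 3 → ℝ} {s : ℝ}

theorem mem_of_dotProduct_eq (hP : IsAxisClosed P) (ha : a ∈ P) (hb : b ∈ P)
    (hw : w ⬝ᵥ w = 1) (h : a ⬝ᵥ w = a ⬝ᵥ b) : w ∈ P := by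
  obtain ⟨φ, rfl⟩ := exists_rodrigues_eq (hP.dotProduct_self a ha) (hP.dotProduct_self b hb) hw
    h.symm
  exact hP.rodrigues_mem a ha b hb φ

/-- If `P` contains the circle of vectors at angle `θ = arccos s` from `a`, it contains the
whole cap of angular radius `2θ` around `a`: each `w` there is obtained by rotating `a` about a
point `c` of the circle equidistant from `a` and `w`. -/
theorem mem_of_two_mul_sq_sub_one_le (hP : IsAxisClosed P) (ha : a ∈ P)
    (hcircle : ∀ c, c ⬝ᵥ c = 1 → a ⬝ᵥ c = s → c ∈ P) (hw : w ⬝ᵥ w = 1)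
    (h : 2 * s ^ 2 - 1 ≤ a ⬝ᵥ w) : w ∈ P := by
  have ha1 := hP.dotProduct_self a ha
  obtain ⟨hge, hle⟩ := abs_le.mp (abs_dotProduct_le_one ha1 hw)
  rcases hle.eq_or_lt with h1 | hlt
  · rwa [eq_of_dotProduct_eq_one ha1 hw h1]
  rcases hge.eq_or_lt with h1 | hgt
  · rw [eq_neg_of_dotProduct_eq_neg_one ha1 hw h1.symm]
    exact hP.neg_mem a ha
  obtain ⟨c, hc, hac, hwc⟩ := exists_dotProduct_eq_dotProduct_eq ha1 hw hlt hgt h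
  exact hP.mem_of_dotProduct_eq (hcircle c hc hac) ha hw
    (by rw [dotProduct_comm, hwc, dotProduct_comm, hac])

theorem forall_mem_of_cap (hP : IsAxisClosed P) (ha : a ∈ P) (hs : s < 1)
    (hcap : ∀ c, c ⬝ᵥ c = 1 → s ≤ a ⬝ᵥ c → c ∈ P) : ∀ w, w ⬝ᵥ w = 1 → w ∈ P := by
  have of_nonpos {s : ℝ} (hs : s ≤ 0) (hcap : ∀ c, c ⬝ᵥ c = 1 → s ≤ a ⬝ᵥ c → c ∈ P)
      (w : Fin 3 → ℝ) (hw : w ⬝ᵥ w = 1) : w ∈ P :=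
    hP.mem_of_two_mul_sq_sub_one_le ha (s := 0) (fun c hc hac => hcap c hc (by linarith)) hw
      (by linarith [abs_le.mp (abs_dotProduct_le_one (hP.dotProduct_self a ha) hw)])
  -- Each doubling of the angular radius at least doubles `1 - s`.
  suffices ∀ n : ℕ, ∀ s : ℝ, 1 ≤ 2 ^ n * (1 - s) →
      (∀ c, c ⬝ᵥ c = 1 → s ≤ a ⬝ᵥ c → c ∈ P) → ∀ w, w ⬝ᵥ w = 1 → w ∈ P by
    obtain ⟨n, hn⟩ := pow_unbounded_of_one_lt (1 - s)⁻¹ one_lt_two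
    exact this n s ((inv_le_iff_one_le_mul₀ (by linarith)).mp hn.le) hcap
  intro n
  induction n with
  | zero => exact fun s hs hcap => of_nonpos (by linarith) hcap
  | succ n ih =>
    intro s hn hcap
    by_cases hs0 : s ≤ 0
    · exact of_nonpos hs0 hcap
    refine ih (2 * s ^ 2 - 1) ?_ fun c hc hac =>
      hP.mem_of_two_mul_sq_sub_one_le ha (fun c hc hac => hcap c hc hac.ge) hc hac
    rw [pow_succ] at hn
    nlinarith [pow_pos (two_pos : (0 : ℝ) < 2) n]

theorem forall_mem (hP : IsAxisClosed P) (ha : a ∈ P) (hb : b ∈ P) (hba : b ≠ a)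
    (hba' : b ≠ -a) : ∀ w, w ⬝ᵥ w = 1 → w ∈ P := by
  have ha1 := hP.dotProduct_self a ha
  have hb1 := hP.dotProduct_self b hb
  obtain ⟨hge, hle⟩ := abs_le.mp (abs_dotProduct_le_one ha1 hb1)
  have hlt : a ⬝ᵥ b < 1 := hle.lt_of_ne fun h => hba (eq_of_dotProduct_eq_one ha1 hb1 h)
  have hgt : -1 < a ⬝ᵥ b :=
    hge.lt_of_ne fun h => hba' (eq_neg_of_dotProduct_eq_neg_one ha1 hb1 h.symm)
  have hcircle (c : Fin 3 → ℝ) (hc : c ⬝ᵥ c = 1) (hac : a ⬝ᵥ c = a ⬝ᵥ b) : c ∈ P :=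
    hP.mem_of_dotProduct_eq ha hb hc hac
  exact hP.forall_mem_of_cap ha (s := 2 * (a ⬝ᵥ b) ^ 2 - 1) (by nlinarith) fun c hc hac =>
    hP.mem_of_two_mul_sq_sub_one_le ha hcircle hc hac

end IsAxisClosed

def symmetryAxes (T : Set (Fin 3 → ℝ)) : Set (Fin 3 → ℝ) :=
  {w | w ⬝ᵥ w = 1 ∧ ∀ φ, rodrigues w φ '' T = T}

section SymmetryAxes

variable {T : Set (Fin 3 → ℝ)} {A : Matrix (Fin 3) (Fin 3) ℝ}

theorem mulVec_mem_symmetryAxes (hA : A ∈ specialOrthogonalGroup (Fin 3) ℝ)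
    (hAT : (A *ᵥ ·) '' T = T) {w : Fin 3 → ℝ} (hw : w ∈ symmetryAxes T) :
    A *ᵥ w ∈ symmetryAxes T := by
  have horth := (mem_specialOrthogonalGroup_iff.mp hA).1
  have hAAt := (mem_orthogonalGroup_iff (Fin 3) ℝ).mp horth
  have hAtA := (mem_orthogonalGroup_iff' (Fin 3) ℝ).mp horth
  have hAtT : (Aᵀ *ᵥ ·) '' T = T := by
    conv_lhs => rw [← hAT, ← Set.image_comp]
    simp [mulVec_mulVec, hAtA]
  refine ⟨by rw [dotProduct_mulVec_mulVec horth, hw.1], fun φ => ?_⟩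
  have hconj : rodrigues (A *ᵥ w) φ = (A *ᵥ ·) ∘ rodrigues w φ ∘ (Aᵀ *ᵥ ·) := by
    ext1 x
    rw [Function.comp_apply, Function.comp_apply, mulVec_rodrigues hA, mulVec_mulVec, hAAt,
      one_mulVec]
  rw [hconj, Set.image_comp, Set.image_comp, hAtT, hw.2 φ, hAT]

theorem isAxisClosed_symmetryAxes (T : Set (Fin 3 → ℝ)) : IsAxisClosed (symmetryAxes T) where
  dotProduct_self _ ha := ha.1
  rodrigues_mem a ha b hb φ := by
    rw [← rodriguesMatrix_mulVec]
    exact mulVec_mem_symmetryAxes (rodriguesMatrix_mem_specialOrthogonalGroup ha.1 φ)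
      (by simpa only [rodriguesMatrix_mulVec] using ha.2 φ) hb
  neg_mem a ha := by
    refine ⟨by rw [neg_dotProduct, dotProduct_neg, neg_neg, ha.1], fun φ => ?_⟩
    rw [funext (rodrigues_neg_axis a φ)]
    exact ha.2 (-φ)

theorem image_mulVec_eq_of_forall_mem_symmetryAxes
    (h : ∀ w, w ⬝ᵥ w = 1 → w ∈ symmetryAxes T) (hA : A ∈ specialOrthogonalGroup (Fin 3) ℝ) :
    (A *ᵥ ·) '' T = T := by
  obtain ⟨w, φ, hw, hAw⟩ := exists_mulVec_eq_rodrigues hA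
  rw [funext hAw]
  exact (h w hw).2 φ

theorem mulVec_eq_or_eq_neg_of_mem_symmetryAxes
    (hT : ∃ B ∈ specialOrthogonalGroup (Fin 3) ℝ, (B *ᵥ ·) '' T ≠ T)
    (hA : A ∈ specialOrthogonalGroup (Fin 3) ℝ) (hAT : (A *ᵥ ·) '' T = T)
    {u : Fin 3 → ℝ} (hu : u ∈ symmetryAxes T) : A *ᵥ u = u ∨ A *ᵥ u = -u := by
  by_contra! h
  obtain ⟨B, hB, hBT⟩ := hT
  exact hBT <| image_mulVec_eq_of_forall_mem_symmetryAxes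
    ((isAxisClosed_symmetryAxes T).forall_mem hu (mulVec_mem_symmetryAxes hA hAT hu) h.1 h.2) hB

end SymmetryAxes

theorem ofLp_rot (u : EuclideanSpace ℝ (Fin 3)) (φ : ℝ) (x : EuclideanSpace ℝ (Fin 3)) :
    (rot u φ x).ofLp = rodrigues u.ofLp φ x.ofLp := by
  simp [rot, rodrigues, EuclideanSpace.inner_eq_star_dotProduct, dotProduct_comm]

theorem dotProduct_ofLp_self (u : EuclideanSpace ℝ (Fin 3)) : u.ofLp ⬝ᵥ u.ofLp = ‖u‖ ^ 2 := by
  rw [← real_inner_self_eq_norm_sq, EuclideanSpace.inner_eq_star_dotProduct, star_trivial]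

theorem image_eq_self_iff_image_ofLp {p : ENNReal} {V : Type*} {S : Set (WithLp p V)}
    {f : WithLp p V → WithLp p V} {g : V → V} (h : ∀ x, (f x).ofLp = g x.ofLp) :
    f '' S = S ↔ g '' (WithLp.ofLp '' S) = WithLp.ofLp '' S := by
  rw [← (Set.image_injective.mpr (WithLp.ofLp_injective p)).eq_iff, ← Set.image_comp,
    ← Set.image_comp, show WithLp.ofLp ∘ f = g ∘ WithLp.ofLp from funext h]

/-- A symmetry `R` of a set `S` with a (unique) infinite-order rotational symmetry axis
`u` maps the line spanned by `u` to itself: `R u = u` or `R u = -u`. -/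
theorem symmetry_preserves_infinite_axis (S : Set (EuclideanSpace ℝ (Fin 3)))
    (R : SO3) (hR : (fun x : EuclideanSpace ℝ (Fin 3) => WithLp.toLp 2 (R.1.1.mulVec x)) '' S = S)
    (u : EuclideanSpace ℝ (Fin 3)) (hu : ‖u‖ = 1)
    (hSu : ∀ φ : ℝ, rot u φ '' S = S)
    (hnot : ¬ ∀ Q : SO3, (fun x : EuclideanSpace ℝ (Fin 3) => WithLp.toLp 2 (Q.1.1.mulVec x)) '' S = S) :
    R.1.1.mulVec u = u ∨ R.1.1.mulVec u = -u := by
  have hSO (Q : SO3) : Q.1.1 ∈ specialOrthogonalGroup (Fin 3) ℝ :=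
    mem_specialOrthogonalGroup_iff.mpr ⟨Q.1.2, Q.2⟩
  have himage (Q : SO3) := image_eq_self_iff_image_ofLp (S := S)
    (f := fun x => WithLp.toLp 2 (Q.1.1 *ᵥ x)) (g := (Q.1.1 *ᵥ ·)) fun _ => rfl
  have hu_axis : u.ofLp ∈ symmetryAxes (WithLp.ofLp '' S) :=
    ⟨by rw [dotProduct_ofLp_self, hu, one_pow],
      fun φ => (image_eq_self_iff_image_ofLp (ofLp_rot u φ)).mp (hSu φ)⟩
  refine mulVec_eq_or_eq_neg_of_mem_symmetryAxes ?_ (hSO R) ((himage R).mp hR) hu_axis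
  obtain ⟨Q, hQ⟩ := not_forall.mp hnot
  exact ⟨Q.1.1, hSO Q, fun h => hQ ((himage Q).mpr h)⟩
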